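/- Subtyping of guarded pattern environments: Let pg be a guarded pattern and t, t' two types such that the pattern environments (t // pg) and (t' // pg) are defined. If t ≤ t' (semantic subtyping), then (t // pg) ≤ (t' // pg), i.e., the two environments have equal domains and (t // pg)(x) ≤ (t' // pg)(x) for every x in the domain. -/
import Mathlib


set_option autoImplicit true
set_option maxHeartbeats 1000000

namespace MiniErl

/-! ## Basic syntax: variables, constants, types -/

/-- Expression variables. -/
abbrev Var := String
/-- Type variables. -/
abbrev TyVar := String

/-- Constants: integers and floats (float literals represented abstractly by a code). -/
inductive Const where
  | int   : Int → Const
  | float : Int → Const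
deriving DecidableEq

/-- Set-theoretic monomorphic types: unions, negations, arrows, products,
type variables, singleton integer types, `Int`, and `Float`. -/
inductive Ty where
  | union : Ty → Ty → Ty
  | neg   : Ty → Ty
  | arrow : Ty → Ty → Ty
  | prod  : Ty → Ty → Ty
  | tvar  : TyVar → Ty
  | sing  : Int → Ty
  | int   : Ty
  | float : Ty
deriving DecidableEq

instance : Inhabited Ty := ⟨Ty.int⟩

namespace Ty
/-- Intersection, defined from union and negation. -/
def inter (t₁ t₂ : Ty) : Ty := .neg (.union (.neg t₁) (.neg t₂))
/-- Difference. -/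
def diff (t₁ t₂ : Ty) : Ty := inter t₁ (.neg t₂)
/-- The empty type. -/
def bot : Ty := inter .int .float
/-- The top type. -/
def top : Ty := .neg bot
end Ty

/-- The type of a constant: singleton type for integers, `Float` for floats. -/
def tyOfConst : Const → Ty
  | .int n => .sing n
  | .float _ => .float

/-! ## Semantic subtyping -/

/-- The semantic model: a domain of set-theoretic values
(constants, pairs, and finite graphs of functions). -/
inductive Dom where
  | const : Const → Dom
  | pair  : Dom → Dom → Dom
  | fn    : List (Dom × Option Dom) → Dom

/-- Interpretation of types as subsets of the model, relative to an
assignment of sets to type variables. -/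
def den (η : TyVar → Set Dom) : Ty → Set Dom
  | .union t₁ t₂ => den η t₁ ∪ den η t₂
  | .neg t => (den η t)ᶜ
  | .arrow t₁ t₂ =>
      { d | ∃ R, d = Dom.fn R ∧
            ∀ p ∈ R, p.1 ∈ den η t₁ → ∃ d', p.2 = some d' ∧ d' ∈ den η t₂ }
  | .prod t₁ t₂ =>
      { d | ∃ d₁ d₂, d = Dom.pair d₁ d₂ ∧ d₁ ∈ den η t₁ ∧ d₂ ∈ den η t₂ }
  | .tvar α => η α
  | .sing n => {Dom.const (Const.int n)}
  | .int => { d | ∃ n, d = Dom.const (Const.int n) }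
  | .float => { d | ∃ n, d = Dom.const (Const.float n) }

/-- Semantic subtyping: set inclusion of interpretations under all assignments. -/
def Subty (t₁ t₂ : Ty) : Prop := ∀ η, den η t₁ ⊆ den η t₂

/-- Semantic equivalence of types. -/
def TyEquiv (t₁ t₂ : Ty) : Prop := Subty t₁ t₂ ∧ Subty t₂ t₁

/-! ## Type substitutions -/

/-- Type substitutions (finite maps from type variables to types). -/
abbrev TySubst := List (TyVar × Ty)

def TySubst.find (θ : TySubst) (α : TyVar) : Option Ty :=
  (θ.find? (fun p => p.1 == α)).map (·.2)

def TySubst.dom (θ : TySubst) : Set TyVar := { α | (TySubst.find θ α).isSome }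

/-- Application of a type substitution to a type. -/
def Ty.subst : Ty → TySubst → Ty
  | .union t₁ t₂, θ => .union (t₁.subst θ) (t₂.subst θ)
  | .neg t, θ => .neg (t.subst θ)
  | .arrow t₁ t₂, θ => .arrow (t₁.subst θ) (t₂.subst θ)
  | .prod t₁ t₂, θ => .prod (t₁.subst θ) (t₂.subst θ)
  | .tvar α, θ => (TySubst.find θ α).getD (.tvar α)
  | .sing n, _ => .sing n
  | .int, _ => .int
  | .float, _ => .float

/-- The list of type variables occurring in a type. -/
def Ty.fvarsList : Ty → List TyVar
  | .union t₁ t₂ => t₁.fvarsList ++ t₂.fvarsList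
  | .neg t => t.fvarsList
  | .arrow t₁ t₂ => t₁.fvarsList ++ t₂.fvarsList
  | .prod t₁ t₂ => t₁.fvarsList ++ t₂.fvarsList
  | .tvar α => [α]
  | .sing _ => []
  | .int => []
  | .float => []

/-- The set of free type variables of a type. -/
def Ty.fvars (t : Ty) : Set TyVar := { α | α ∈ t.fvarsList }

/-- Free type variables of the range of a type substitution. -/
def TySubst.fvRange (θ : TySubst) : Set TyVar := { α | ∃ p ∈ θ, α ∈ p.2.fvarsList }

/-- Finite unions of types. -/
def unionList : List Ty → Ty
  | [] => Ty.bot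
  | t :: ts => .union t (unionList ts)

/-- Finite intersections of types. -/
def interList : List Ty → Ty
  | [] => Ty.top
  | t :: ts => Ty.inter t (interList ts)

/-! ## Guard types -/

/-- Guard types for dynamic type tests. -/
inductive GuardTy where
  | int | float | anyPair | anyFun
deriving DecidableEq

/-- The type corresponding to a guard type. -/
def GuardTy.toTy : GuardTy → Ty
  | .int => .int
  | .float => .float
  | .anyPair => .prod Ty.top Ty.top
  | .anyFun => .arrow Ty.bot Ty.top

end MiniErl

namespace MiniErl

/-! ## Expression syntax -/

mutual
/-- Expressions of MiniErl. -/
inductive Expr where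
  | var   : Var → Expr
  | const : Const → Expr
  | abs   : Var → Expr → Expr
  | app   : Expr → Expr → Expr
  | pair  : Expr → Expr → Expr
  | caseE : Expr → Branches → Expr

/-- Lists of pattern clauses of a case expression. -/
inductive Branches where
  | nil  : Branches
  | cons : GPat → Expr → Branches → Branches

/-- Patterns: values, wildcard, binding variables, bound (captured) variables, pairs. -/
inductive Pat where
  | val     : Expr → Pat
  | wild    : Pat
  | bind    : Var → Pat
  | capture : Var → Pat
  | pair    : Pat → Pat → Pat

/-- Guards: type tests on variables and on values, the oracle, true, conjunction. -/
inductive Guard where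
  | isVar  : GuardTy → Var → Guard
  | isVal  : GuardTy → Expr → Guard
  | oracle : Guard
  | tru    : Guard
  | and    : Guard → Guard → Guard

/-- Guarded patterns `p when g`. -/
inductive GPat where
  | mk : Pat → Guard → GPat
end

instance : Inhabited Expr := ⟨.const (.int 0)⟩
instance : Inhabited GPat := ⟨.mk .wild .tru⟩

/-- The pattern of a guarded pattern. -/
def GPat.pat : GPat → Pat
  | .mk p _ => p

/-- The guard of a guarded pattern. -/
def GPat.grd : GPat → Guard
  | .mk _ g => g

/-- The expression variables bound by a pattern. -/
def Pat.bound : Pat → List Var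
  | .bind x => [x]
  | .pair p₁ p₂ => p₁.bound ++ p₂.bound
  | _ => []

/-- The branches of a case expression, as a list of clauses. -/
def Branches.toList : Branches → List (GPat × Expr)
  | .nil => []
  | .cons pg e bs => (pg, e) :: bs.toList

/-! ## Value substitutions and substitution application -/

/-- Value substitutions: finite maps from expression variables to values. -/
abbrev VSubst := List (Var × Expr)

def VSubst.find (ς : VSubst) (x : Var) : Option Expr :=
  (ς.find? (fun p => p.1 == x)).map (·.2)

def VSubst.dom (ς : VSubst) : Set Var := { x | (VSubst.find ς x).isSome }

def VSubst.remove (ς : VSubst) (xs : List Var) : VSubst :=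
  ς.filter (fun p => !xs.contains p.1)

/-- Two substitutions are similar when they agree on shared variables. -/
def VSubst.Agree (ς₁ ς₂ : VSubst) : Prop :=
  ∀ x v₁ v₂, VSubst.find ς₁ x = some v₁ → VSubst.find ς₂ x = some v₂ → v₁ = v₂

mutual
/-- Applying a value substitution to an expression. -/
def substExpr : Expr → VSubst → Expr
  | .var x, ς => (VSubst.find ς x).getD (.var x)
  | .const c, _ => .const c
  | .abs x e, ς => .abs x (substExpr e (VSubst.remove ς [x]))
  | .app e₁ e₂, ς => .app (substExpr e₁ ς) (substExpr e₂ ς)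
  | .pair e₁ e₂, ς => .pair (substExpr e₁ ς) (substExpr e₂ ς)
  | .caseE e bs, ς => .caseE (substExpr e ς) (substBranches bs ς)

def substBranches : Branches → VSubst → Branches
  | .nil, _ => .nil
  | .cons pg e bs, ς =>
      .cons (substGPat pg ς)
        (substExpr e (VSubst.remove ς (Pat.bound (GPat.pat pg))))
        (substBranches bs ς)

def substPat : Pat → VSubst → Pat
  | .val v, ς => .val (substExpr v ς)
  | .wild, _ => .wild
  | .bind x, _ => .bind x
  | .capture x, _ => .capture x
  | .pair p₁ p₂, ς => .pair (substPat p₁ ς) (substPat p₂ ς)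

def substGuard : Guard → VSubst → Guard
  | .isVar gt x, ς =>
      match VSubst.find ς x with
      | some v => .isVal gt v
      | none => .isVar gt x
  | .isVal gt v, ς => .isVal gt (substExpr v ς)
  | .oracle, _ => .oracle
  | .tru, _ => .tru
  | .and g₁ g₂, ς => .and (substGuard g₁ ς) (substGuard g₂ ς)

def substGPat : GPat → VSubst → GPat
  | .mk p g, ς => .mk (substPat p ς) (substGuard g (VSubst.remove ς (Pat.bound p)))
end

mutual
/-- Free expression variables of an expression. -/
def fvExpr : Expr → List Var
  | .var x => [x]
  | .const _ => []
  | .abs x e => (fvExpr e).filter (fun y => y != x)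
  | .app e₁ e₂ => fvExpr e₁ ++ fvExpr e₂
  | .pair e₁ e₂ => fvExpr e₁ ++ fvExpr e₂
  | .caseE e bs => fvExpr e ++ fvBranches bs

def fvBranches : Branches → List Var
  | .nil => []
  | .cons pg e bs =>
      fvGPat pg ++ ((fvExpr e).filter (fun y => !(Pat.bound (GPat.pat pg)).contains y))
        ++ fvBranches bs

def fvPat : Pat → List Var
  | .val v => fvExpr v
  | .wild => []
  | .bind _ => []
  | .capture x => [x]
  | .pair p₁ p₂ => fvPat p₁ ++ fvPat p₂

def fvGuard : Guard → List Var
  | .isVar _ x => [x]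
  | .isVal _ v => fvExpr v
  | .oracle => []
  | .tru => []
  | .and g₁ g₂ => fvGuard g₁ ++ fvGuard g₂

def fvGPat : GPat → List Var
  | .mk p g => fvPat p ++ ((fvGuard g).filter (fun y => !(Pat.bound p).contains y))
end

/-! ## Values -/

/-- Values: constants, lambda abstractions, and pairs of values. -/
inductive IsValue : Expr → Prop where
  | const : IsValue (.const c)
  | abs   : IsValue (.abs x e)
  | pair  : IsValue v₁ → IsValue v₂ → IsValue (.pair v₁ v₂)

/-- A value matches a guard type. -/
inductive ValMatches : Expr → GuardTy → Prop where
  | int   : ValMatches (.const (.int n)) .int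
  | float : ValMatches (.const (.float n)) .float
  | pair  : ValMatches (.pair v₁ v₂) .anyPair
  | fn    : ValMatches (.abs x e) .anyFun

end MiniErl

namespace MiniErl

/-! ## Type schemes and environments -/

/-- Type schemes `∀ A. t`. A monomorphic type is identified with a scheme whose
variable list is empty. -/
structure Scheme where
  vars : List TyVar
  ty   : Ty

/-- Free type variables of a type scheme. -/
def Scheme.fvars (σ : Scheme) : Set TyVar := { α | α ∈ σ.ty.fvarsList ∧ α ∉ σ.vars }

/-- (Capture-avoiding) application of a type substitution to a scheme. -/
def Scheme.subst (σ : Scheme) (θ : TySubst) : Scheme :=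
  ⟨σ.vars, σ.ty.subst (θ.filter (fun p => !σ.vars.contains p.1))⟩

/-- Instances of a type scheme: substitute exactly the quantified variables. -/
def Scheme.Inst (σ : Scheme) (t : Ty) : Prop :=
  ∃ θ : TySubst, TySubst.dom θ = { α | α ∈ σ.vars } ∧ t = σ.ty.subst θ

/-- Generalization of a type scheme: a monomorphic type is generalized over
all its free type variables. -/
def Scheme.gen (σ : Scheme) : Scheme :=
  if σ.vars = [] then ⟨σ.ty.fvarsList, σ.ty⟩ else σ

/-- Monomorphic type environments. -/
abbrev TEnv := Var → Option Ty
/-- Scheme environments. -/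
abbrev SEnv := Var → Option Scheme

def TEnv.empty : TEnv := fun _ => none
def SEnv.empty : SEnv := fun _ => none

def TEnv.dom (Γ : TEnv) : Set Var := { x | (Γ x).isSome }
def SEnv.dom (S : SEnv) : Set Var := { x | (S x).isSome }

def TEnv.update (Γ : TEnv) (x : Var) (t : Ty) : TEnv :=
  fun y => if y = x then some t else Γ y

def TEnv.single (x : Var) (t : Ty) : TEnv :=
  fun y => if y = x then some t else none

def SEnv.single (x : Var) (σ : Scheme) : SEnv :=
  fun y => if y = x then some σ else none

/-- Intersection of type environments (pointwise type intersection on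
shared variables, union of the domains). -/
def TEnv.inter (Γ₁ Γ₂ : TEnv) : TEnv := fun x =>
  match Γ₁ x, Γ₂ x with
  | some t₁, some t₂ => some (Ty.inter t₁ t₂)
  | some t₁, none => some t₁
  | none, o => o

/-- Concatenation of type environments; bindings in the second take precedence. -/
def TEnv.append (Γ₁ Γ₂ : TEnv) : TEnv := fun x => (Γ₂ x).orElse (fun _ => Γ₁ x)

/-- Concatenation of scheme environments; bindings in the second take precedence. -/
def SEnv.append (S₁ S₂ : SEnv) : SEnv := fun x => (S₂ x).orElse (fun _ => S₁ x)

def concatSEnvs (l : List SEnv) : SEnv := l.foldl SEnv.append SEnv.empty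

/-- Subtyping of type environments: equal domains and pointwise semantic subtyping. -/
def TEnv.le (Γ' Γ : TEnv) : Prop :=
  (∀ x, (Γ' x).isSome ↔ (Γ x).isSome) ∧
  (∀ x t' t, Γ' x = some t' → Γ x = some t → Subty t' t)

/-- `Γ ≠ ⊥`: no variable is bound to an empty type. -/
def TEnv.ok (Γ : TEnv) : Prop := ∀ x t, Γ x = some t → ¬ Subty t Ty.bot

/-- Pointwise application of a type substitution to a type environment. -/
def TEnv.subst (Γ : TEnv) (θ : TySubst) : TEnv := fun x => (Γ x).map (·.subst θ)

/-- Pointwise application of a type substitution to a scheme environment. -/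
def SEnv.subst (S : SEnv) (θ : TySubst) : SEnv := fun x => (S x).map (·.subst θ)

/-- Pointwise generalization of a scheme environment. -/
def SEnv.gen (S : SEnv) : SEnv := fun x => (S x).map Scheme.gen

/-! ## Top-level definitions and programs -/

/-- Top-level definitions: `x = λy.e`, optionally with a type-scheme annotation. -/
inductive Defn where
  | plain : Var → Var → Expr → Defn
  | ann   : Var → Scheme → Var → Expr → Defn

def Defn.name : Defn → Var
  | .plain x _ _ => x
  | .ann x _ _ _ => x

def Defn.lam : Defn → Expr
  | .plain _ y e => .abs y e
  | .ann _ _ y e => .abs y e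

/-- Lookup of a letrec-bound variable in a definition list. -/
def lookupF (F : List Defn) (x : Var) : Option Expr :=
  (F.find? (fun d => d.name == x)).map Defn.lam

def domF (F : List Defn) : Set Var := { x | (lookupF F x).isSome }

/-- Programs: mutually recursive top-level definitions with a main expression. -/
structure Program where
  defs : List Defn
  main : Expr

/-! ## Dynamic semantics -/

/-- Evaluation of guards (the oracle may evaluate to anything). -/
inductive EvalGuard (F : List Defn) : Guard → Bool → Prop where
  | isValT : ValMatches v gt → EvalGuard F (.isVal gt v) true
  | isValF : ¬ ValMatches v gt → EvalGuard F (.isVal gt v) false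
  | isVarT : lookupF F x = some v → ValMatches v gt → EvalGuard F (.isVar gt x) true
  | isVarF : (∀ v, lookupF F x = some v → ¬ ValMatches v gt) →
      EvalGuard F (.isVar gt x) false
  | oracle : ∀ b, EvalGuard F .oracle b
  | tru    : EvalGuard F .tru true
  | and    : EvalGuard F g₁ b₁ → EvalGuard F g₂ b₂ → EvalGuard F (.and g₁ g₂) (b₁ && b₂)

/-- Matching a value against a pattern, yielding a substitution or `none` (fail). -/
inductive MatchP (F : List Defn) : Expr → Pat → Option VSubst → Prop where
  | valEq : MatchP F v (.val v) (some [])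
  | valNe : v ≠ v' → MatchP F v (.val v') none
  | wild : MatchP F v .wild (some [])
  | bind : MatchP F v (.bind x) (some [(x, v)])
  | capture : lookupF F x = some v' → MatchP F v (.val v') r → MatchP F v (.capture x) r
  | pairSome : MatchP F v₁ p₁ (some ς₁) → MatchP F v₂ p₂ (some ς₂) →
      VSubst.Agree ς₁ ς₂ → MatchP F (.pair v₁ v₂) (.pair p₁ p₂) (some (ς₁ ++ ς₂))
  | pairNotPair : (∀ v₁ v₂, v ≠ Expr.pair v₁ v₂) → MatchP F v (.pair p₁ p₂) none
  | pairFail₁ : MatchP F v₁ p₁ none → MatchP F (.pair v₁ v₂) (.pair p₁ p₂) none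
  | pairFail₂ : MatchP F v₂ p₂ none → MatchP F (.pair v₁ v₂) (.pair p₁ p₂) none
  | pairDisagree : MatchP F v₁ p₁ (some ς₁) → MatchP F v₂ p₂ (some ς₂) →
      ¬ VSubst.Agree ς₁ ς₂ → MatchP F (.pair v₁ v₂) (.pair p₁ p₂) none

/-- Matching a value against a guarded pattern. -/
inductive MatchG (F : List Defn) : Expr → GPat → Option VSubst → Prop where
  | patFail : MatchP F v p none → MatchG F v (.mk p g) none
  | guardFalse : MatchP F v p (some ς) → EvalGuard F (substGuard g ς) false →
      MatchG F v (.mk p g) none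
  | guardTrue : MatchP F v p (some ς) → EvalGuard F (substGuard g ς) true →
      MatchG F v (.mk p g) (some ς)

/-- First-match reduction of a value against the branches of a case expression. -/
inductive CaseRed (F : List Defn) (v : Expr) : Branches → Expr → Prop where
  | here  : MatchG F v pg (some ς) → CaseRed F v (.cons pg e bs) (substExpr e ς)
  | there : MatchG F v pg none → CaseRed F v bs e' → CaseRed F v (.cons pg e bs) e'

/-- Call-by-value small-step reduction of expressions under definitions `F`. -/
inductive Step (F : List Defn) : Expr → Expr → Prop where
  | beta : IsValue v → Step F (.app (.abs x e) v) (substExpr e [(x, v)])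
  | var : lookupF F x = some v → Step F (.var x) v
  | caseMatch : IsValue v → CaseRed F v bs e' → Step F (.caseE v bs) e'
  | appL : Step F e₁ e₁' → Step F (.app e₁ e₂) (.app e₁' e₂)
  | appR : IsValue v → Step F e e' → Step F (.app v e) (.app v e')
  | pairL : Step F e₁ e₁' → Step F (.pair e₁ e₂) (.pair e₁' e₂)
  | pairR : IsValue v → Step F e e' → Step F (.pair v e) (.pair v e')
  | caseScrut : Step F e e' → Step F (.caseE e bs) (.caseE e' bs)

/-- One-step reduction of programs: reduce the main expression under fixed definitions. -/
inductive StepProg : Program → Program → Prop where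
  | mk : Step F e e' → StepProg ⟨F, e⟩ ⟨F, e'⟩

end MiniErl

namespace MiniErl

/-! ## Static semantics of guarded patterns -/

/-- The guard environment `env(g)`. -/
def Guard.env : Guard → TEnv
  | .isVar gt x => TEnv.single x gt.toTy
  | .isVal _ _ => TEnv.empty
  | .oracle => TEnv.empty
  | .tru => TEnv.empty
  | .and g₁ g₂ => TEnv.inter (Guard.env g₁) (Guard.env g₂)

/-- `safe↑(g)`: the guard may possibly succeed. -/
def Guard.safeUp : Guard → Prop
  | .isVar _ _ => True
  | .isVal gt v => ValMatches v gt
  | .oracle => True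
  | .tru => True
  | .and g₁ g₂ => Guard.safeUp g₁ ∧ Guard.safeUp g₂

/-- `safe↓(g, X)`: the guard always succeeds for the variables in `X`. -/
def Guard.safeDown (X : Set Var) : Guard → Prop
  | .isVar _ x => x ∈ X
  | .isVal gt v => ValMatches v gt
  | .oracle => False
  | .tru => True
  | .and g₁ g₂ => Guard.safeDown X g₁ ∧ Guard.safeDown X g₂

/-- Potential type of a pattern with respect to a (guard) environment. -/
def patUp (Γ : TEnv) : Pat → Ty
  | .val (.const c) => tyOfConst c
  | .val _ => Ty.top
  | .wild => Ty.top
  | .bind x => (Γ x).getD Ty.top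
  | .capture _ => Ty.top
  | .pair p₁ p₂ => .prod (patUp Γ p₁) (patUp Γ p₂)

/-- Accepting type of a pattern with respect to a (guard) environment. -/
def patDown (Γ : TEnv) : Pat → Ty
  | .val (.const (.int n)) => .sing n
  | .val _ => Ty.bot
  | .wild => Ty.top
  | .bind x => (Γ x).getD Ty.top
  | .capture _ => Ty.bot
  | .pair p₁ p₂ => .prod (patDown Γ p₁) (patDown Γ p₂)

open Classical in
/-- Potential type `⌈pg⌉` of a guarded pattern: every expression matching
`pg` has this type. -/
noncomputable def GPat.up : GPat → Ty
  | .mk p g =>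
      if Guard.safeUp g ∧ TEnv.ok (Guard.env g) then patUp (Guard.env g) p else Ty.bot

open Classical in
/-- Accepting type `⌊pg⌋` of a guarded pattern: every expression of this type
matches `pg`. -/
noncomputable def GPat.down : GPat → Ty
  | .mk p g =>
      if Guard.safeDown { x | x ∈ p.bound } g ∧ TEnv.ok (Guard.env g) ∧ p.bound.Nodup
      then patDown (Guard.env g) p else Ty.bot

/-- `t₁` and `t₂` are the (left and right) projections of a product type `t`:
the least pair of types (w.r.t. semantic subtyping) such that `t ≤ t₁ × t₂`. -/
def IsProj (t t₁ t₂ : Ty) : Prop :=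
  Subty t (.prod t₁ t₂) ∧ ∀ u₁ u₂, Subty t (.prod u₁ u₂) → Subty t₁ u₁ ∧ Subty t₂ u₂

/-- The pattern environment `t // p` obtained by matching a pattern against a type. -/
inductive PatEnv : Ty → Pat → TEnv → Prop where
  | val : PatEnv t (.val v) TEnv.empty
  | wild : PatEnv t .wild TEnv.empty
  | capture : PatEnv t (.capture x) TEnv.empty
  | bind : PatEnv t (.bind x) (TEnv.single x t)
  | pair : IsProj t t₁ t₂ → PatEnv t₁ p₁ Γ₁ → PatEnv t₂ p₂ Γ₂ →
      PatEnv t (.pair p₁ p₂) (TEnv.inter Γ₁ Γ₂)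

/-- The pattern environment `t // pg` obtained by matching a guarded pattern
against a type. -/
inductive GPatEnv : Ty → GPat → TEnv → Prop where
  | mk : PatEnv t p Γ → GPatEnv t (.mk p g) (TEnv.inter Γ (Guard.env g))

/-! ## The declarative type system -/

/-- The declarative typing judgment `Σ; Γ ⊢ e : t`. -/
inductive HasTy (S : SEnv) : TEnv → Expr → Ty → Prop where
  | var : ∀ {Γ : TEnv} {x t},
      Γ x = some t → S x = none → HasTy S Γ (.var x) t
  | varPoly : ∀ {Γ : TEnv} {x σ t},
      S x = some σ → Γ x = none → Scheme.Inst σ t → HasTy S Γ (.var x) t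
  | const : ∀ {Γ : TEnv} {c}, HasTy S Γ (.const c) (tyOfConst c)
  | abs : ∀ {Γ : TEnv} {x e t₁ t₂},
      HasTy S (TEnv.update Γ x t₁) e t₂ → HasTy S Γ (.abs x e) (.arrow t₁ t₂)
  | app : ∀ {Γ : TEnv} {e₁ e₂ t' t},
      HasTy S Γ e₁ (.arrow t' t) → HasTy S Γ e₂ t' → HasTy S Γ (.app e₁ e₂) t
  | pair : ∀ {Γ : TEnv} {e₁ e₂ t₁ t₂},
      HasTy S Γ e₁ t₁ → HasTy S Γ e₂ t₂ → HasTy S Γ (.pair e₁ e₂) (.prod t₁ t₂)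
  | sub : ∀ {Γ : TEnv} {e t' t},
      HasTy S Γ e t' → Subty t' t → HasTy S Γ e t
  | hcase : ∀ {Γ : TEnv} {e : Expr} {bs : Branches} {t : Ty}
      (inT outT : ℕ → Ty) (Gp : ℕ → TEnv),
      HasTy S Γ e t →
      Subty t (unionList (bs.toList.map (fun b => GPat.down b.1))) →
      (∀ i (hi : i < bs.toList.length),
        { x | x ∈ fvGPat (bs.toList.get ⟨i, hi⟩).1 } ⊆ SEnv.dom S ∪ TEnv.dom Γ) →
      (∀ i (hi : i < bs.toList.length),
        inT i = Ty.inter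
          (Ty.diff t (unionList ((bs.toList.take i).map (fun b => GPat.down b.1))))
          (GPat.up (bs.toList.get ⟨i, hi⟩).1)) →
      (∀ i (hi : i < bs.toList.length),
        ∃ Γp, GPatEnv (inT i) (bs.toList.get ⟨i, hi⟩).1 Γp ∧ Gp i = TEnv.inter Γ Γp) →
      (∀ i (hi : i < bs.toList.length),
        Subty (inT i) Ty.bot →
          outT i = Ty.bot ∧
          { x | x ∈ fvExpr (bs.toList.get ⟨i, hi⟩).2 } ⊆ SEnv.dom S ∪ TEnv.dom (Gp i)) →
      (∀ i (hi : i < bs.toList.length),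
        ¬ Subty (inT i) Ty.bot → HasTy S (Gp i) (bs.toList.get ⟨i, hi⟩).2 (outT i)) →
      HasTy S Γ (.caseE e bs) (unionList ((List.range bs.toList.length).map outT))

/-- Typing of top-level definitions, `Σ ⊢ d`. -/
inductive DefOk (S : SEnv) : Defn → Prop where
  | plain : ∀ {x y e t},
      S x = some ⟨[], t⟩ → HasTy S TEnv.empty (.abs y e) t → DefOk S (.plain x y e)
  | ann : ∀ {x σ y e} (arr : List (Ty × Ty)),
      S x = some σ →
      Scheme.fvars σ = ∅ →
      σ.ty = interList (arr.map (fun p => Ty.arrow p.1 p.2)) →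
      (∀ p ∈ arr, HasTy S (TEnv.single y p.1) e p.2) →
      DefOk S (.ann x σ y e)

/-- Environments generated from a definition, `Envs(d) = ⟨Σ, Σ'⟩`. -/
inductive DefEnvs : Defn → SEnv → SEnv → Prop where
  | plain : ∀ {x y e} (t : Ty),
      DefEnvs (.plain x y e) (SEnv.single x ⟨[], t⟩) (SEnv.single x ⟨t.fvarsList, t⟩)
  | ann : ∀ {x σ y e},
      ({ α | α ∈ σ.vars } : Set TyVar) = σ.ty.fvars →
      DefEnvs (.ann x σ y e) (SEnv.single x σ) (SEnv.single x σ)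

/-- Program typing `⊢ P : t`. -/
def ProgTy (P : Program) (t : Ty) : Prop :=
  ∃ S₁ S₂ : Fin P.defs.length → SEnv,
    (∀ i, DefEnvs (P.defs.get i) (S₁ i) (S₂ i)) ∧
    (∀ i, DefOk (concatSEnvs (List.ofFn S₁)) (P.defs.get i)) ∧
    HasTy (concatSEnvs (List.ofFn S₂)) TEnv.empty P.main t

/-- The definition list `F` is in accordance with the scheme environment `Σ`
(written `F ⋈ Σ`). -/
def Accord (F : List Defn) (S : SEnv) : Prop :=
  ∃ S₁ S₂ : Fin F.length → SEnv,
    (∀ i, DefEnvs (F.get i) (S₁ i) (S₂ i)) ∧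
    (∀ i, DefOk (concatSEnvs (List.ofFn S₁)) (F.get i)) ∧
    S = concatSEnvs (List.ofFn S₂)

end MiniErl

namespace MiniErl

/-! ## Constraints -/

/-- Constraints: subtyping constraints, variable constraints, definition
constraints, conjunctions, and case constraints with per-branch
`unless` conditions. -/
inductive Constr where
  | subty : Ty → Ty → Constr
  | vsub  : Var → Ty → Constr
  | cdef  : TEnv → Constr → Constr
  | cand  : Constr → Constr → Constr
  | ccase : Constr → List (TEnv × Constr × Constr) → Constr

/-- Program constraints `let C with Σ in C'`. -/
structure ProgConstr where
  defsC : Constr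
  senv  : SEnv
  mainC : Constr

/-- Simple constraints: subtyping constraints, conjunctions, and disjunctions. -/
inductive SConstr where
  | subty : Ty → Ty → SConstr
  | sand  : SConstr → SConstr → SConstr
  | sor   : SConstr → SConstr → SConstr

/-- A type substitution solves a simple constraint. -/
def Solves (θ : TySubst) : SConstr → Prop
  | .subty t₁ t₂ => Subty (t₁.subst θ) (t₂.subst θ)
  | .sand c₁ c₂ => Solves θ c₁ ∧ Solves θ c₂
  | .sor c₁ c₂ => Solves θ c₁ ∨ Solves θ c₂

/-- Free type variables of a simple constraint. -/
def SConstr.fvars : SConstr → Set TyVar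
  | .subty t₁ t₂ => t₁.fvars ∪ t₂.fvars
  | .sand c₁ c₂ => c₁.fvars ∪ c₂.fvars
  | .sor c₁ c₂ => c₁.fvars ∪ c₂.fvars

/-- The trivially satisfied constraint. -/
def Constr.tt : Constr := .subty Ty.bot Ty.top
/-- The trivially satisfied simple constraint. -/
def SConstr.tt : SConstr := .subty Ty.bot Ty.top

def andCList : List Constr → Constr
  | [] => Constr.tt
  | c :: cs => .cand c (andCList cs)

def andSList : List SConstr → SConstr
  | [] => SConstr.tt
  | c :: cs => .sand c (andSList cs)

/-- A constraint is simple when it is built from subtyping constraints and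
conjunctions only; in this case it can be read as a simple constraint. -/
def Constr.toSimple? : Constr → Option SConstr
  | .subty t₁ t₂ => some (.subty t₁ t₂)
  | .cand C₁ C₂ =>
      match C₁.toSimple?, C₂.toSimple? with
      | some c₁, some c₂ => some (.sand c₁ c₂)
      | _, _ => none
  | _ => none

/-- Scoping constraints for the free variables of a guarded pattern. -/
def scopeConstr (xs : List Var) : Constr :=
  andCList (xs.map (fun x => Constr.vsub x Ty.top))

/-! ## Constraint generation -/

/-- Environment and constraint generation for patterns. -/
inductive PatConstr : Ty → Pat → Constr → TEnv → Set TyVar → Prop where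
  | val : ∀ {t v}, PatConstr t (.val v) Constr.tt TEnv.empty ∅
  | wild : ∀ {t}, PatConstr t .wild Constr.tt TEnv.empty ∅
  | capture : ∀ {t x}, PatConstr t (.capture x) Constr.tt TEnv.empty ∅
  | bind : ∀ {t x}, PatConstr t (.bind x) Constr.tt (TEnv.single x t) ∅
  | pair : ∀ {t p₁ p₂ α₁ α₂ C₁ C₂ Γ₁ Γ₂ A₁ A₂},
      PatConstr (.tvar α₁) p₁ C₁ Γ₁ A₁ → PatConstr (.tvar α₂) p₂ C₂ Γ₂ A₂ →
      Disjoint A₁ A₂ → α₁ ∉ A₁ ∪ A₂ → α₂ ∉ A₁ ∪ A₂ → α₁ ≠ α₂ →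
      PatConstr t (.pair p₁ p₂)
        (.cand (.cand C₁ C₂) (.subty t (.prod (.tvar α₁) (.tvar α₂))))
        (TEnv.inter Γ₁ Γ₂) (A₁ ∪ A₂ ∪ {α₁, α₂})

/-- Environment and constraint generation for guarded patterns. -/
inductive GPatConstr : Ty → GPat → Constr → TEnv → Set TyVar → Prop where
  | mk : ∀ {t p g C Γ A},
      PatConstr t p C Γ A →
      GPatConstr t (.mk p g) (.cand C (scopeConstr (fvGPat (.mk p g))))
        (TEnv.inter Γ (Guard.env g)) A

/-- The per-branch triples (environment, body constraint, `unless` constraint)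
of the constraint generated for a case expression. -/
noncomputable def caseBranchTriples (α : TyVar) (L : List (GPat × Expr))
    (Γi : ℕ → TEnv) (Di : ℕ → Constr) : List (TEnv × Constr × Constr) :=
  (List.range L.length).map (fun i =>
    (Γi i, Di i,
      Constr.subty (.tvar α)
        (.union (unionList ((L.take i).map (fun b => GPat.down b.1)))
                (.neg (GPat.up (L.getD i default).1)))))

/-- Constraint generation for expressions, tracking the introduced fresh
type variables. -/
inductive ConstrGen : Expr → Ty → Constr → Set TyVar → Prop where
  | var : ∀ {x t}, ConstrGen (.var x) t (.vsub x t) ∅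
  | const : ∀ {c t}, ConstrGen (.const c) t (.subty (tyOfConst c) t) ∅
  | abs : ∀ {x e t α β C A},
      ConstrGen e (.tvar β) C A → α ∉ A → β ∉ A → α ≠ β →
      ConstrGen (.abs x e) t
        (.cand (.cdef (TEnv.single x (.tvar α)) C)
               (.subty (.arrow (.tvar α) (.tvar β)) t))
        (A ∪ {α, β})
  | app : ∀ {e₁ e₂ t α β C₁ C₂ A₁ A₂},
      ConstrGen e₁ (.arrow (.tvar α) (.tvar β)) C₁ A₁ →
      ConstrGen e₂ (.tvar α) C₂ A₂ →
      Disjoint A₁ A₂ → α ∉ A₁ ∪ A₂ → β ∉ A₁ ∪ A₂ → α ≠ β →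
      ConstrGen (.app e₁ e₂) t (.cand (.cand C₁ C₂) (.subty (.tvar β) t))
        (A₁ ∪ A₂ ∪ {α, β})
  | pair : ∀ {e₁ e₂ t α₁ α₂ C₁ C₂ A₁ A₂},
      ConstrGen e₁ (.tvar α₁) C₁ A₁ → ConstrGen e₂ (.tvar α₂) C₂ A₂ →
      Disjoint A₁ A₂ → α₁ ∉ A₁ ∪ A₂ → α₂ ∉ A₁ ∪ A₂ → α₁ ≠ α₂ →
      ConstrGen (.pair e₁ e₂) t
        (.cand (.cand C₁ C₂) (.subty (.prod (.tvar α₁) (.tvar α₂)) t))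
        (A₁ ∪ A₂ ∪ {α₁, α₂})
  | hcase : ∀ {e : Expr} {bs : Branches} {t : Ty} {α β : TyVar} {C : Constr}
      {A' : Set TyVar} (Ci Di : ℕ → Constr) (Γi : ℕ → TEnv) (Ai Ai' : ℕ → Set TyVar),
      ConstrGen e (.tvar α) C A' →
      (∀ i (hi : i < bs.toList.length),
        GPatConstr
          (Ty.inter
            (Ty.diff (.tvar α)
              (unionList ((bs.toList.take i).map (fun b => GPat.down b.1))))
            (GPat.up (bs.toList.get ⟨i, hi⟩).1))
          (bs.toList.get ⟨i, hi⟩).1 (Ci i) (Γi i) (Ai i)) →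
      (∀ i (hi : i < bs.toList.length),
        ConstrGen (bs.toList.get ⟨i, hi⟩).2 (.tvar β) (Di i) (Ai' i)) →
      α ≠ β → α ∉ A' → β ∉ A' →
      (∀ i, i < bs.toList.length →
        α ∉ Ai i ∪ Ai' i ∧ β ∉ Ai i ∪ Ai' i ∧
        Disjoint A' (Ai i ∪ Ai' i) ∧ Disjoint (Ai i) (Ai' i)) →
      (∀ i j, i < bs.toList.length → j < bs.toList.length → i ≠ j →
        Disjoint (Ai i ∪ Ai' i) (Ai j ∪ Ai' j)) →
      ConstrGen (.caseE e bs) t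
        (.cand
          (.ccase
            (.cand
              (.cand C
                (.subty (.tvar α) (unionList (bs.toList.map (fun b => GPat.down b.1)))))
              (andCList ((List.range bs.toList.length).map Ci)))
            (caseBranchTriples α bs.toList Γi Di))
          (.subty (.tvar β) t))
        (A' ∪ {α, β} ∪ ⋃ i ∈ Finset.range bs.toList.length, (Ai i ∪ Ai' i))

/-- Constraint generation for definitions. -/
inductive DefConstr : Defn → Constr → SEnv → Set TyVar → Prop where
  | plain : ∀ {x y e α C A},
      ConstrGen (.abs y e) (.tvar α) C A → α ∉ A →
      DefConstr (.plain x y e) C (SEnv.single x ⟨[], .tvar α⟩) (A ∪ {α})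
  | ann : ∀ {x σ y e} (arr : List (Ty × Ty)) (Cs : ℕ → Constr) (Bs : ℕ → Set TyVar),
      Scheme.fvars σ = ∅ →
      σ.ty = interList (arr.map (fun p => Ty.arrow p.1 p.2)) →
      (∀ i (hi : i < arr.length), ConstrGen e (arr.get ⟨i, hi⟩).2 (Cs i) (Bs i)) →
      (∀ i j, i < arr.length → j < arr.length → i ≠ j → Disjoint (Bs i) (Bs j)) →
      (∀ i, i < arr.length → Disjoint (Bs i) { a | a ∈ σ.vars }) →
      DefConstr (.ann x σ y e)
        (andCList ((List.range arr.length).map (fun i =>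
          Constr.cdef (TEnv.single y (arr.getD i default).1) (Cs i))))
        (SEnv.single x σ)
        ({ a | a ∈ σ.vars } ∪ ⋃ i ∈ Finset.range arr.length, Bs i)

/-- Constraint generation for programs. -/
inductive ProgConstrGen : Program → Ty → ProgConstr → Prop where
  | mk : ∀ {P : Program} {t : Ty} {C' : Constr} {A' : Set TyVar}
      (Cs : Fin P.defs.length → Constr) (Ss : Fin P.defs.length → SEnv)
      (As : Fin P.defs.length → Set TyVar),
      (∀ i, DefConstr (P.defs.get i) (Cs i) (Ss i) (As i)) →
      ConstrGen P.main t C' A' →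
      ProgConstrGen P t ⟨andCList (List.ofFn Cs), concatSEnvs (List.ofFn Ss), C'⟩

/-! ## Constraint rewriting -/

/-- Constraint rewriting: turning a constraint into a simple constraint,
relative to a scheme environment and a type environment, tracking the fresh
type variables introduced by instantiating type schemes. -/
inductive ConstrRew (S : SEnv) : TEnv → Constr → SConstr → Set TyVar → Prop where
  | cand : ∀ {Γ C₁ C₂ c₁ c₂ A₁ A₂},
      ConstrRew S Γ C₁ c₁ A₁ → ConstrRew S Γ C₂ c₂ A₂ → Disjoint A₁ A₂ →
      ConstrRew S Γ (.cand C₁ C₂) (.sand c₁ c₂) (A₁ ∪ A₂)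
  | subty : ∀ {Γ t₁ t₂}, ConstrRew S Γ (.subty t₁ t₂) (.subty t₁ t₂) ∅
  | var : ∀ {Γ : TEnv} {x t t'},
      S x = none → Γ x = some t' →
      ConstrRew S Γ (.vsub x t) (.subty t' t) ∅
  | varPoly : ∀ {Γ : TEnv} {x t σ},
      Γ x = none → S x = some σ →
      ConstrRew S Γ (.vsub x t) (.subty σ.ty t) { α | α ∈ σ.vars }
  | cdef : ∀ {Γ Γ' C c A},
      ConstrRew S (TEnv.append Γ Γ') C c A →
      ConstrRew S Γ (.cdef Γ' C) c A
  | ccase : ∀ {Γ C c A'} (l : List (TEnv × Constr × Constr))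
      (hc bc : ℕ → SConstr) (hA bA : ℕ → Set TyVar),
      ConstrRew S Γ C c A' →
      (∀ i (hi : i < l.length), ConstrRew S Γ (l.get ⟨i, hi⟩).2.2 (hc i) (hA i)) →
      (∀ i (hi : i < l.length),
        ConstrRew S (TEnv.inter Γ (l.get ⟨i, hi⟩).1) (l.get ⟨i, hi⟩).2.1 (bc i) (bA i)) →
      (∀ i, i < l.length → Disjoint A' (hA i ∪ bA i) ∧ Disjoint (hA i) (bA i)) →
      (∀ i j, i < l.length → j < l.length → i ≠ j →
        Disjoint (hA i ∪ bA i) (hA j ∪ bA j)) →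
      ConstrRew S Γ (.ccase C l)
        (.sand c (andSList ((List.range l.length).map (fun i => SConstr.sor (hc i) (bc i)))))
        (A' ∪ ⋃ i ∈ Finset.range l.length, (hA i ∪ bA i))

/-- The equivalence constraint fixing a type substitution. -/
def equivConstr (θ : TySubst) : SConstr :=
  andSList (θ.map (fun p =>
    SConstr.sand (.subty (.tvar p.1) p.2) (.subty p.2 (.tvar p.1))))

/-- Program constraint rewriting, relative to a tally algorithm: rewrite and
solve the constraint for the definitions with a chosen solution `θ*`,
generalize `Σθ*`, rewrite the main constraint under this environment, and
conjoin an equivalence constraint fixing `θ*`. -/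
inductive ProgRew (tally : SConstr → Set TySubst) : ProgConstr → SConstr → Prop where
  | mk : ∀ {C : Constr} {Se : SEnv} {C' : Constr} {c c' : SConstr}
      {A A' : Set TyVar} {θs : TySubst},
      ConstrRew Se TEnv.empty C c A →
      θs ∈ tally c →
      ConstrRew (SEnv.gen (Se.subst θs)) TEnv.empty C' c' A' →
      ProgRew tally ⟨C, Se, C'⟩ (.sand (equivConstr θs) c')

end MiniErl

namespace MiniErl

lemma den_inter (η : TyVar → Set Dom) (a b : Ty) :
    den η (Ty.inter a b) = den η a ∩ den η b := by
  simp [Ty.inter, den, Set.compl_union, compl_compl]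

lemma Subty.refl (t : Ty) : Subty t t := fun _ _ h => h

lemma Subty.trans {a b c : Ty} (h₁ : Subty a b) (h₂ : Subty b c) : Subty a c :=
  fun η => (h₁ η).trans (h₂ η)

lemma subty_inter_mono {a a' b b' : Ty} (h₁ : Subty a a') (h₂ : Subty b b') :
    Subty (Ty.inter a b) (Ty.inter a' b') := by
  intro η
  rw [den_inter, den_inter]
  exact Set.inter_subset_inter (h₁ η) (h₂ η)

lemma TEnv.le.refl (Γ : TEnv) : TEnv.le Γ Γ :=
  ⟨fun _ => Iff.rfl, fun _ _ _ h1 h2 => by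
    rw [h1] at h2; cases h2; exact Subty.refl _⟩

lemma tenv_le_inter {Γ₁ Γ₂ Γ₁' Γ₂' : TEnv}
    (h₁ : TEnv.le Γ₁ Γ₁') (h₂ : TEnv.le Γ₂ Γ₂') :
    TEnv.le (TEnv.inter Γ₁ Γ₂) (TEnv.inter Γ₁' Γ₂') := by
  obtain ⟨d₁, s₁⟩ := h₁
  obtain ⟨d₂, s₂⟩ := h₂
  constructor
  · intro x
    have e1 := d₁ x; have e2 := d₂ x
    simp only [TEnv.inter]
    cases h1 : Γ₁ x <;> cases h2 : Γ₂ x <;>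
      cases h1' : Γ₁' x <;> cases h2' : Γ₂' x <;>
      simp_all
  · intro x u u' hu hu'
    have e1 := d₁ x; have e2 := d₂ x
    simp only [TEnv.inter] at hu hu'
    cases h1 : Γ₁ x <;> cases h2 : Γ₂ x <;>
      cases h1' : Γ₁' x <;> cases h2' : Γ₂' x <;>
      simp_all
    · exact s₂ x _ _ h2 h2'
    · exact s₁ x _ _ h1 h1'
    · subst hu hu'
      exact subty_inter_mono (s₁ x _ _ h1 h1') (s₂ x _ _ h2 h2')

lemma proj_mono {t t' t₁ t₂ t₁' t₂' : Ty}
    (h : IsProj t t₁ t₂) (h' : IsProj t' t₁' t₂') (hsub : Subty t t') :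
    Subty t₁ t₁' ∧ Subty t₂ t₂' :=
  h.2 t₁' t₂' (hsub.trans h'.1)

lemma patenv_mono :
    ∀ {p : Pat} {t t' : Ty} {Γ Γ' : TEnv},
      PatEnv t p Γ → PatEnv t' p Γ' → Subty t t' → TEnv.le Γ Γ' := by
  intro p t t' Γ Γ' h
  induction h generalizing t' Γ' with
  | val => intro h' _; cases h'; exact TEnv.le.refl _
  | wild => intro h' _; cases h'; exact TEnv.le.refl _
  | capture => intro h' _; cases h'; exact TEnv.le.refl _
  | bind =>
    intro h' hsub
    cases h'
    constructor
    · intro y; simp [TEnv.single]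
    · intro y u u' hu hu'
      simp only [TEnv.single] at hu hu'
      split at hu
      · cases hu; simp_all
      · cases hu
  | pair hp hc₁ hc₂ ih₁ ih₂ =>
    intro h' hsub
    cases h' with
    | pair hp' hc₁' hc₂' =>
      obtain ⟨s₁, s₂⟩ := proj_mono hp hp' hsub
      exact tenv_le_inter (ih₁ hc₁' s₁) (ih₂ hc₂' s₂)

/-- **Subtyping of guarded pattern environments.** Let `pg` be a guarded
pattern and `t, t'` two types such that the pattern environments `(t // pg)`
and `(t' // pg)` are defined. If `t ≤ t'`, then `(t // pg) ≤ (t' // pg)`: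
the two environments have equal domains and pointwise semantic subtyping
holds. -/
theorem subtyping_of_guarded_pattern_environments
    (pg : GPat) (t t' : Ty) (Γ Γ' : TEnv)
    (h : GPatEnv t pg Γ) (h' : GPatEnv t' pg Γ')
    (hsub : Subty t t') :
    TEnv.le Γ Γ' := by
  cases h with
  | mk hp =>
    cases h' with
    | mk hp' =>
      exact tenv_le_inter (patenv_mono hp hp' hsub) (TEnv.le.refl _)

end MiniErl
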